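/- Let G be a graph where every vertex has degree Δ-1 or Δ, with maximum codegree at most ηΔ, where Δ ≥ 1, γ ≤ 1/2, and Δ^{-1/2} ≤ η ≤ γ²/8. Let A be a p-random subset of V(G) with p = γ/Δ and let G' = G \ (A ∪ N(A)). Then for all distinct u, v ∈ V(G): E(d_{G'}(u,v) | u,v ∈ G') ≤ (1 - γ + γ²)·d_G(u,v). -/

import Mathlib

/-!
Conditioned on `u, v ∈ G'`, i.e. on `A` missing `N[u] ∪ N[v]`, a common neighbour `w` of `u` and
`v` survives iff `A` also misses `N[w] \ (N[u] ∪ N[v])`; by independence this has probability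
`(1 - p) ^ n` with `n = |N[w] \ (N[u] ∪ N[v])|`. Only `u`, `v`, `w` and the two codegrees of `w`
can be lost from `N[w]`, so `n ≥ (1 - 2η)Δ - 4` and `np ≥ γ - c` with `c = 2ηγ + 4γ/Δ ≤ γ²/2`
(as `Δ⁻¹ ≤ η² ≤ γ⁴/64`). Then `(1 - p) ^ n ≤ exp (-np) ≤ 1 - (γ - c) + (γ - c)²/2 ≤ 1 - γ + γ²`,
and linearity of expectation over the common neighbours gives the bound.
-/

open MeasureTheory ProbabilityTheory Finset

lemma Real.exp_neg_le_one_sub_add_sq_div_two {s : ℝ} (hs : 0 ≤ s) :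
    Real.exp (-s) ≤ 1 - s + s ^ 2 / 2 := by
  have hq : 0 < 1 - s + s ^ 2 / 2 := by nlinarith [sq_nonneg (s - 1)]
  rw [Real.exp_neg, inv_le_iff_one_le_mul₀' (Real.exp_pos s)]
  -- `(1 + s + s²/2) (1 - s + s²/2) = 1 + s⁴/4`
  nlinarith [mul_le_mul_of_nonneg_right (Real.quadratic_le_exp_of_nonneg hs) hq.le, pow_nonneg hs 4]

lemma Real.inv_le_sq_of_rpow_neg_half_le {x η : ℝ} (hx : 0 ≤ x) (h : x ^ (-(1:ℝ)/2) ≤ η) :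
    x⁻¹ ≤ η ^ 2 := by
  calc x⁻¹ = (x ^ (-(1:ℝ)/2)) ^ 2 := by
        rw [← Real.rpow_natCast, ← Real.rpow_mul hx]; norm_num [Real.rpow_neg_one]
    _ ≤ η ^ 2 := pow_le_pow_left₀ (Real.rpow_nonneg hx _) h 2

lemma one_sub_div_pow_le_one_sub_add_sq {Δ γ η : ℝ} {n : ℕ} (hΔ : 0 < Δ) (hγ0 : 0 < γ)
    (hγ : γ ≤ 1 / 2) (hη0 : 0 ≤ η) (hη : η ≤ γ ^ 2 / 8) (hΔη : Δ⁻¹ ≤ η ^ 2)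
    (hn : (1 - 2 * η) * Δ - 4 ≤ n) :
    (1 - γ / Δ) ^ n ≤ 1 - γ + γ ^ 2 := by
  have hp0 : 0 ≤ γ / Δ := by positivity
  have hp : γ / Δ ≤ γ ^ 5 / 64 := by
    calc γ / Δ = γ * Δ⁻¹ := div_eq_mul_inv γ Δ
      _ ≤ γ * (γ ^ 2 / 8) ^ 2 := by gcongr; exact hΔη.trans (pow_le_pow_left₀ hη0 hη 2)
      _ = γ ^ 5 / 64 := by ring
  set c := 2 * η * γ + 4 * (γ / Δ) with hc
  have hc0 : 0 ≤ c := by positivity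
  have hc_le : c ≤ γ ^ 2 / 2 := by nlinarith [pow_le_pow_left₀ hγ0.le hγ 3]
  have hnp : γ - c ≤ n * (γ / Δ) := by
    have hexp : ((1 - 2 * η) * Δ - 4) * (γ / Δ) = γ - c := by rw [hc]; field_simp; ring
    linarith [mul_le_mul_of_nonneg_right hn hp0]
  calc (1 - γ / Δ) ^ n ≤ Real.exp (-(γ / Δ)) ^ n := by
        gcongr
        · nlinarith [pow_le_pow_left₀ hγ0.le hγ 5]
        · exact Real.one_sub_le_exp_neg _
    _ = Real.exp (-(n * (γ / Δ))) := by rw [← Real.exp_nat_mul, mul_neg]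
    _ ≤ Real.exp (-(γ - c)) := Real.exp_le_exp.2 (neg_le_neg hnp)
    _ ≤ 1 - (γ - c) + (γ - c) ^ 2 / 2 := Real.exp_neg_le_one_sub_add_sq_div_two (by nlinarith)
    _ ≤ 1 - γ + γ ^ 2 := by nlinarith [mul_nonneg hc0 (by nlinarith : 0 ≤ 2 * γ - c)]

lemma measureReal_cond_pi_finset_pi_const {ι α : Type*} [Fintype ι] [DecidableEq ι]
    [MeasurableSpace α] (ν : Measure α) [IsProbabilityMeasure ν] {s : Set α}
    (hs : MeasurableSet s) (hν : ν s ≠ 0) (A B : Finset ι) :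
    ((Measure.pi fun _ : ι => ν)[|(A : Set ι).pi fun _ => s]).real ((B : Set ι).pi fun _ => s)
      = ν.real s ^ #(B \ A) := by
  have hA : MeasurableSet ((A : Set ι).pi fun _ => s) := .pi A.countable_toSet fun _ _ => hs
  have hcard : #(A ∪ B) = #A + #(B \ A) := by
    rw [← union_sdiff_self_eq_union, card_union_of_disjoint disjoint_sdiff]
  rw [measureReal_def, cond_apply hA, ← Set.union_pi, ← coe_union, Measure.pi_pi_finset,
    Measure.pi_pi_finset, prod_const, prod_const, hcard, pow_add,
    ENNReal.inv_mul_cancel_left (pow_ne_zero _ hν) (by finiteness), ENNReal.toReal_pow,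
    measureReal_def]

lemma PMF.measureReal_bernoulli_false (p : NNReal) (h : p ≤ 1) :
    (PMF.bernoulli p h).toMeasure.real {false} = 1 - p := by
  rw [measureReal_def, PMF.toMeasure_apply_singleton _ _ (measurableSet_singleton _),
    PMF.bernoulli_apply]
  simp [ENNReal.toReal_sub_of_le (ENNReal.coe_le_one_iff.2 h) ENNReal.one_ne_top]

lemma integral_natCard_setOf_and {ι Ω : Type*} [Fintype ι] [MeasurableSpace Ω]
    (μ : Measure Ω) [IsFiniteMeasure μ] (p : ι → Prop) [DecidablePred p] (q : ι → Ω → Prop)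
    (hq : ∀ i, MeasurableSet {ω | q i ω}) :
    ∫ ω, (Nat.card {i | p i ∧ q i ω} : ℝ) ∂μ = ∑ i with p i, μ.real {ω | q i ω} := by
  classical
  have hcount (ω : Ω) : (Nat.card {i | p i ∧ q i ω} : ℝ)
      = ∑ i with p i, {ω | q i ω}.indicator 1 ω := by
    rw [Nat.card_eq_card_toFinset, Set.toFinset_ofPred, ← filter_filter, card_filter]
    push_cast
    simp [Set.indicator_apply]
  simp_rw [hcount]
  rw [integral_finsetSum _ fun i _ => (integrable_const 1).indicator (hq i)]
  simp_rw [integral_indicator_one (hq _)]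

namespace SimpleGraph

variable {V : Type*} [Fintype V] [DecidableEq V] (G : SimpleGraph V) [DecidableRel G.Adj]

def closedNeighborFinset (v : V) : Finset V := insert v (G.neighborFinset v)

variable {G} in
lemma mem_closedNeighborFinset {v w : V} :
    w ∈ G.closedNeighborFinset v ↔ w = v ∨ G.Adj v w := by
  simp [closedNeighborFinset]

lemma card_closedNeighborFinset (v : V) : #(G.closedNeighborFinset v) = G.degree v + 1 := by
  rw [closedNeighborFinset, card_insert_of_notMem (by simp), card_neighborFinset_eq_degree]

lemma natCard_setOf_adj_and_adj (u v : V) :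
    Nat.card {w | G.Adj u w ∧ G.Adj v w} = #(G.neighborFinset u ∩ G.neighborFinset v) := by
  rw [Nat.card_eq_card_toFinset]
  congr 1
  ext w
  simp

lemma card_closedNeighborFinset_inter_le (w u : V) :
    #(G.closedNeighborFinset w ∩ G.closedNeighborFinset u)
      ≤ #(G.neighborFinset w ∩ G.neighborFinset u) + 2 := by
  have hsub : G.closedNeighborFinset w ∩ G.closedNeighborFinset u
      ⊆ insert w (insert u (G.neighborFinset w ∩ G.neighborFinset u)) := by
    intro x
    simp only [mem_inter, mem_closedNeighborFinset, mem_insert, mem_neighborFinset]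
    grind [SimpleGraph.Adj.symm]
  grw [card_le_card hsub, card_insert_le, card_insert_le]

lemma degree_add_one_le_card_closedNeighborFinset_sdiff_add (u v w : V) :
    G.degree w + 1
      ≤ #(G.closedNeighborFinset w \ (G.closedNeighborFinset u ∪ G.closedNeighborFinset v))
        + #(G.neighborFinset w ∩ G.neighborFinset u)
        + #(G.neighborFinset w ∩ G.neighborFinset v) + 4 := by
  rw [← card_closedNeighborFinset,
    ← card_sdiff_add_card_inter _ (G.closedNeighborFinset u ∪ G.closedNeighborFinset v),
    inter_union_distrib_left]
  grw [card_union_le, card_closedNeighborFinset_inter_le, card_closedNeighborFinset_inter_le]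
  omega

lemma le_card_closedNeighborFinset_sdiff {Δ : ℕ} {η : ℝ} {u v w : V}
    (hdeg : Δ ≤ G.degree w + 1) (hwu : (#(G.neighborFinset w ∩ G.neighborFinset u) : ℝ) ≤ η * Δ)
    (hwv : (#(G.neighborFinset w ∩ G.neighborFinset v) : ℝ) ≤ η * Δ) :
    (1 - 2 * η) * Δ - 4
      ≤ #(G.closedNeighborFinset w \ (G.closedNeighborFinset u ∪ G.closedNeighborFinset v)) := by
  have hcard := (Nat.cast_le (α := ℝ)).2
    (hdeg.trans (G.degree_add_one_le_card_closedNeighborFinset_sdiff_add u v w))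
  push_cast at hcard
  linarith

end SimpleGraph

open SimpleGraph in
theorem expected_codegree_after_nibble {V : Type} [Fintype V] (G : SimpleGraph V)
    [DecidableRel G.Adj] (Δ : ℕ) (γ η : ℝ) (hΔ : 1 ≤ Δ) (hγ0 : 0 < γ) (hγ : γ ≤ 1/2)
    (hη1 : (Δ : ℝ) ^ (-(1:ℝ)/2) ≤ η) (hη2 : η ≤ γ^2/8)
    (hdeg : ∀ v : V, G.degree v = Δ - 1 ∨ G.degree v = Δ)
    (hcodeg : ∀ u v : V, u ≠ v → (Nat.card {w : V | G.Adj u w ∧ G.Adj v w} : ℝ) ≤ η * Δ)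
    (hp : ENNReal.ofReal (γ / Δ) ≤ 1)
    (P : Measure (V → Bool))
    (hP : P = Measure.pi fun _ : V => (PMF.bernoulli (ENNReal.ofReal (γ / Δ)).toNNReal
      (by simpa using ENNReal.toNNReal_mono ENNReal.one_ne_top hp)).toMeasure)
    (inG' : V → (V → Bool) → Prop)
    (hinG' : ∀ u ω, inG' u ω ↔ (ω u = false ∧ ∀ w, G.Adj u w → ω w = false))
    (u v : V) :
    ∫ ω, (Nat.card {w : V | G.Adj u w ∧ G.Adj v w ∧ inG' w ω} : ℝ)
        ∂(P[|{ω | inG' u ω ∧ inG' v ω}])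
      ≤ (1 - γ + γ^2) * Nat.card {w : V | G.Adj u w ∧ G.Adj v w} := by
  classical
  subst hP
  have hΔ1 : (1 : ℝ) ≤ Δ := by exact_mod_cast hΔ
  have hevent (w : V) :
      {ω | inG' w ω} = (G.closedNeighborFinset w : Set V).pi fun _ => {false} := by
    ext ω
    simp [hinG', Set.mem_pi, mem_closedNeighborFinset]
  have hE : {ω | inG' u ω ∧ inG' v ω}
      = ((G.closedNeighborFinset u ∪ G.closedNeighborFinset v : Finset V) : Set V).pi
          fun _ => {false} := by
    rw [coe_union, Set.union_pi, ← hevent, ← hevent]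
    rfl
  have hfalse := PMF.measureReal_bernoulli_false _
    (by simpa using ENNReal.toNNReal_mono ENNReal.one_ne_top hp)
  rw [ENNReal.coe_toNNReal_eq_toReal, ENNReal.toReal_ofReal (by positivity)] at hfalse
  simp_rw [← and_assoc]
  rw [hE, integral_natCard_setOf_and _ (fun w => G.Adj u w ∧ G.Adj v w) inG'
    fun w => hevent w ▸ .pi (Finset.countable_toSet _) fun _ _ => measurableSet_singleton _]
  calc _ ≤ ∑ w with G.Adj u w ∧ G.Adj v w, (1 - γ + γ ^ 2) := sum_le_sum fun w hw => ?_
    _ = _ := by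
      rw [sum_const, nsmul_eq_mul, Nat.card_eq_card_toFinset, Set.toFinset_ofPred, mul_comm]
  obtain ⟨huw, hvw⟩ := (mem_filter.1 hw).2
  rw [hevent, measureReal_cond_pi_finset_pi_const _ (measurableSet_singleton _)
    (fun h => by simp [measureReal_def, h] at hfalse; linarith [div_le_self hγ0.le hΔ1]), hfalse]
  refine one_sub_div_pow_le_one_sub_add_sq (by positivity) hγ0 hγ
    ((Real.rpow_nonneg (by positivity) _).trans hη1) hη2
    (Real.inv_le_sq_of_rpow_neg_half_le (by positivity) hη1)
    (G.le_card_closedNeighborFinset_sdiff (by rcases hdeg w with h | h <;> omega) ?_ ?_)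
  · simpa only [natCard_setOf_adj_and_adj] using hcodeg w u (G.ne_of_adj huw).symm
  · simpa only [natCard_setOf_adj_and_adj] using hcodeg w v (G.ne_of_adj hvw).symm
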